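/- Every extreme point z of the polytope ℛ' is integral, i.e., z_i ∈ ℤ (hence z_i ∈ {0,1}) for every i ∈ 𝓕'. -/

import Mathlib

/-!
If an extreme point `z` of `ℛ'` had a fractional coordinate, we find a direction `d ≠ 0`, vanishing
on the integral coordinates, that is parallel to every constraint tight at `z`; then `z ± εd ∈ ℛ'`
for small `ε`, contradicting extremality.

By submodularity of matroid rank, the tight rank constraints of `M'` (resp. `M₂`) are closed under
`∪` and `∩`, hence linearly spanned by a chain. The chain of `M'` is one laminar family; the chain
of `M₂`, the sets `S_j` and whichever of `𝓕₁'`, `𝓕₂`, `𝓕'` carry a tight bound form another. Both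
have integral sums, so in each member the fractional coordinates not covered by smaller members
number zero or at least two. Each family therefore imposes at most half as many independent
conditions as there are fractional coordinates, and if both impose exactly half, both sum to the
indicator of the fractional support, which is a linear dependency. So some `d ≠ 0` satisfies all
of them.
-/

open scoped Classical
open Finset

/-- The rank function of a matroid: the maximum cardinality of an independent
subset of the given set. -/
noncomputable def matroidRank {α : Type*} (M : Matroid α) (S : Finset α) : ℕ :=
  (S.powerset.filter (fun I : Finset α => M.Indep ↑I)).sup Finset.card

section MatroidRank

variable {α : Type*} (M : Matroid α)

theorem matroidRank_eq_eRk (S : Finset α) : (matroidRank M S : ℕ∞) = M.eRk S := by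
  refine le_antisymm ?_ ?_
  · obtain ⟨I, hI, hIr⟩ := exists_mem_eq_sup (S.powerset.filter (fun I : Finset α => M.Indep ↑I))
      ⟨∅, mem_filter.2 ⟨empty_mem_powerset S, by simp⟩⟩ card
    rw [matroidRank, hIr, ← Set.encard_coe_eq_coe_finsetCard]
    obtain ⟨hIS, hIind⟩ := mem_filter.1 hI
    exact hIind.encard_le_eRk_of_subset (by simpa using hIS)
  · obtain ⟨I, hI⟩ := M.exists_isBasis' S
    have hIfin : I.Finite := S.finite_toSet.subset hI.subset
    rw [← hI.encard_eq_eRk, ← hIfin.coe_toFinset, Set.encard_coe_eq_coe_finsetCard]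
    exact Nat.cast_le.2 <| le_sup <| mem_filter.2
      ⟨mem_powerset.2 (by simpa using hI.subset), by simpa using hI.indep⟩

theorem matroidRank_le_card (S : Finset α) : matroidRank M S ≤ #S := by
  have := (matroidRank_eq_eRk M S).trans_le (M.eRk_le_encard S)
  rwa [Set.encard_coe_eq_coe_finsetCard, Nat.cast_le] at this

theorem matroidRank_union_add_inter_le [DecidableEq α] (A B : Finset α) :
    matroidRank M (A ∪ B) + matroidRank M (A ∩ B) ≤ matroidRank M A + matroidRank M B := by
  have := M.eRk_inter_add_eRk_union_le A B
  rw [← coe_inter, ← coe_union, ← matroidRank_eq_eRk, ← matroidRank_eq_eRk,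
    ← matroidRank_eq_eRk, ← matroidRank_eq_eRk] at this
  exact_mod_cast (add_comm _ _).trans_le this

end MatroidRank

section Chain

variable {γ M : Type*} [DecidableEq γ] [AddCommGroup M]

theorem subset_or_union_eq_of_forall_card_le {T : Finset (Finset γ)}
    (hunion : ∀ A ∈ T, ∀ B ∈ T, A ∪ B ∈ T) {m A' : Finset γ} (hA' : A' ∈ T.erase m)
    (hA'max : ∀ A ∈ T.erase m, #A ≤ #A') {B : Finset γ} (hB : B ∈ T) : B ⊆ A' ∨ B ∪ A' = m := by
  refine or_iff_not_imp_left.2 fun hBA' => ?_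
  by_contra hne
  have hlt : #A' < #(B ∪ A') := card_lt_card <| Finset.ssubset_iff_subset_ne.2
    ⟨subset_union_right, fun h => hBA' (h ▸ subset_union_left)⟩
  exact (hA'max _ (mem_erase.2 ⟨hne, hunion B hB A' (mem_of_mem_erase hA')⟩)).not_gt hlt

theorem exists_isChain_forall_sum_eq_zero (T : Finset (Finset γ))
    (hunion : ∀ A ∈ T, ∀ B ∈ T, A ∪ B ∈ T) (hinter : ∀ A ∈ T, ∀ B ∈ T, A ∩ B ∈ T) :
    ∃ C ⊆ T, IsChain (· ⊆ ·) (C : Set (Finset γ)) ∧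
      ∀ d : γ → M, (∀ A ∈ C, ∑ i ∈ A, d i = 0) → ∀ B ∈ T, ∑ i ∈ B, d i = 0 := by
  induction T using Finset.strongInduction with
  | H T ih =>
  obtain rfl | hT := T.eq_empty_or_nonempty
  · exact ⟨∅, empty_subset _, by simp, by simp⟩
  obtain ⟨m, hm, hle⟩ : ∃ m ∈ T, ∀ A ∈ T, A ⊆ m :=
    ⟨T.sup' hT id, sup'_mem (T : Set (Finset γ)) hunion T hT id fun _ h => h,
      fun A hA => le_sup' id hA⟩
  obtain hTm | hT' := (T.erase m).eq_empty_or_nonempty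
  · refine ⟨{m}, by simpa using hm, by simp, fun d hd B hB => ?_⟩
    obtain rfl : B = m := by
      by_contra hBm
      simpa [hTm] using mem_erase.2 ⟨hBm, hB⟩
    exact hd B (mem_singleton_self B)
  -- The chain is `m` on top of a chain for the members below a largest proper member `A'`.
  obtain ⟨A', hA'm, hA'max⟩ := exists_max_image (T.erase m) card hT'
  obtain ⟨hA'ne, hA'⟩ := mem_erase.1 hA'm
  have hsub : T.filter (· ⊆ A') ⊂ T := by
    refine ssubset_of_subset_of_ne (filter_subset _ _) fun h => hA'ne ?_
    have hmA' : m ∈ T.filter (· ⊆ A') := by rwa [h]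
    exact subset_antisymm (hle A' hA') (mem_filter.1 hmA').2
  obtain ⟨C, hCT, hC, hCd⟩ := ih _ hsub
    (fun A hA B hB => by
      simp only [mem_filter] at hA hB ⊢
      exact ⟨hunion A hA.1 B hB.1, union_subset hA.2 hB.2⟩)
    (fun A hA B hB => by
      simp only [mem_filter] at hA hB ⊢
      exact ⟨hinter A hA.1 B hB.1, inter_subset_left.trans hA.2⟩)
  refine ⟨insert m C, insert_subset hm (hCT.trans (filter_subset _ _)), ?_, fun d hd B hB => ?_⟩
  · rw [coe_insert]
    exact hC.insert fun A hA _ => Or.inr (hle A (mem_filter.1 (hCT hA)).1)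
  have hCd' := hCd d fun A hA => hd A (mem_insert_of_mem hA)
  obtain hBA' | hBA'm := subset_or_union_eq_of_forall_card_le hunion hA'm hA'max hB
  · exact hCd' B (mem_filter.2 ⟨hB, hBA'⟩)
  have hsplit := sum_union_inter (s₁ := B) (s₂ := A') (f := d)
  rw [hBA'm, hd m (mem_insert_self m C),
    hCd' _ (mem_filter.2 ⟨hinter B hB A' hA', inter_subset_right⟩),
    hCd' A' (mem_filter.2 ⟨hA', subset_rfl⟩)] at hsplit
  simpa using hsplit.symm

theorem exists_isChain_forall_sum_eq_zero_of_submodular [Fintype γ] {f : Finset γ → ℝ}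
    (hf : ∀ A B, f (A ∪ B) + f (A ∩ B) ≤ f A + f B) {z : γ → ℝ} (hz : ∀ T, ∑ i ∈ T, z i ≤ f T) :
    ∃ C : Finset (Finset γ), (∀ A ∈ C, ∑ i ∈ A, z i = f A) ∧ IsChain (· ⊆ ·) (C : Set (Finset γ)) ∧
      ∀ d : γ → ℝ, (∀ A ∈ C, ∑ i ∈ A, d i = 0) → ∀ B, ∑ i ∈ B, z i = f B → ∑ i ∈ B, d i = 0 := by
  have htight : ∀ A B, ∑ i ∈ A, z i = f A → ∑ i ∈ B, z i = f B →
      ∑ i ∈ A ∪ B, z i = f (A ∪ B) ∧ ∑ i ∈ A ∩ B, z i = f (A ∩ B) := fun A B hA hB => by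
    have := sum_union_inter (s₁ := A) (s₂ := B) (f := z)
    have := hz (A ∪ B)
    have := hz (A ∩ B)
    have := hf A B
    constructor <;> linarith
  obtain ⟨C, hCT, hC, hCd⟩ := exists_isChain_forall_sum_eq_zero (M := ℝ)
    {T | ∑ i ∈ T, z i = f T}
    (fun A hA B hB => by
      simp only [mem_filter, mem_univ, true_and] at hA hB ⊢
      exact (htight A B hA hB).1)
    (fun A hA B hB => by
      simp only [mem_filter, mem_univ, true_and] at hA hB ⊢
      exact (htight A B hA hB).2)
  exact ⟨C, fun A hA => (mem_filter.1 (hCT hA)).2, hC, fun d hd B hB =>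
    hCd d hd B (mem_filter.2 ⟨mem_univ _, hB⟩)⟩

end Chain

section Laminar

variable {γ : Type*}

def IsLaminar (L : Finset (Finset γ)) : Prop :=
  ∀ A ∈ L, ∀ B ∈ L, A ⊆ B ∨ B ⊆ A ∨ Disjoint A B

namespace IsLaminar

variable {L L' : Finset (Finset γ)}

theorem of_isChain (hL : IsChain (· ⊆ ·) (L : Set (Finset γ))) : IsLaminar L := fun _ hA _ hB =>
  (hL.total hA hB).imp_right Or.inl

theorem subset (hL : IsLaminar L) (h : L' ⊆ L) : IsLaminar L' := fun A hA B hB =>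
  hL A (h hA) B (h hB)

theorem image_map {δ : Type*} [DecidableEq δ] (hL : IsLaminar L) (e : γ ↪ δ) :
    IsLaminar (L.image (·.map e)) := by
  simp only [IsLaminar, mem_image]
  rintro _ ⟨A, hA, rfl⟩ _ ⟨B, hB, rfl⟩
  simpa only [map_subset_map, disjoint_map] using hL A hA B hB

variable [DecidableEq γ]

theorem image_of_pairwise_disjoint {ι : Type*} (s : Finset ι) {S : ι → Finset γ}
    (hS : Pairwise fun j k => Disjoint (S j) (S k)) : IsLaminar (s.image S) := by
  simp only [IsLaminar, mem_image]
  rintro _ ⟨j, -, rfl⟩ _ ⟨k, -, rfl⟩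
  obtain rfl | hjk := eq_or_ne j k
  · exact Or.inl subset_rfl
  · exact Or.inr (Or.inr (hS hjk))

theorem insert (hL : IsLaminar L) {X : Finset γ} (hX : ∀ A ∈ L, A ⊆ X) :
    IsLaminar (insert X L) := by
  simp only [IsLaminar, mem_insert]
  rintro A (rfl | hA) B (rfl | hB)
  · exact Or.inl subset_rfl
  · exact Or.inr (Or.inl (hX B hB))
  · exact Or.inl (hX A hA)
  · exact hL A hA B hB

theorem union (hL : IsLaminar L) (hL' : IsLaminar L') (h : ∀ A ∈ L, ∀ B ∈ L', Disjoint A B) :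
    IsLaminar (L ∪ L') := by
  simp only [IsLaminar, mem_union]
  rintro A (hA | hA) B (hB | hB)
  · exact hL A hA B hB
  · exact Or.inr (Or.inr (h A hA B hB))
  · exact Or.inr (Or.inr (h B hB A hA).symm)
  · exact hL' A hA B hB

noncomputable def children (L : Finset (Finset γ)) (A : Finset γ) : Finset (Finset γ) :=
  {B ∈ L | Maximal (· ∈ {C ∈ L | C ⊂ A}) B}

def privatePart (L : Finset (Finset γ)) (A : Finset γ) : Finset γ :=
  A \ {B ∈ L | B ⊂ A}.biUnion id

variable {M : Type*} [AddCommGroup M]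

theorem biUnion_children (A : Finset γ) :
    (children L A).biUnion id = {B ∈ L | B ⊂ A}.biUnion id := by
  refine subset_antisymm (biUnion_subset_biUnion_of_subset_left _ fun B hB => ?_) fun x hx => ?_
  · exact (mem_filter.1 hB).2.1
  obtain ⟨B, hB, hxB⟩ := mem_biUnion.1 hx
  obtain ⟨B', hBB', hB'⟩ := exists_le_maximal _ hB
  exact mem_biUnion.2 ⟨B', mem_filter.2 ⟨(mem_filter.1 hB'.1).1, hB'⟩, hBB' hxB⟩

theorem pairwiseDisjoint_children (hL : IsLaminar L) (A : Finset γ) :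
    (children L A : Set (Finset γ)).PairwiseDisjoint id := by
  intro B hB B' hB' hne
  simp only [children, coe_filter, Set.mem_ofPred_eq] at hB hB'
  rcases hL B hB.1 B' hB'.1 with h | h | h
  · exact absurd (le_antisymm h (hB.2.2 hB'.2.1 h)) hne
  · exact absurd (le_antisymm (hB'.2.2 hB.2.1 h) h) hne
  · exact h

theorem sum_eq_sum_privatePart_add (hL : IsLaminar L) (A : Finset γ) (f : γ → M) :
    ∑ i ∈ A, f i = ∑ i ∈ privatePart L A, f i + ∑ B ∈ children L A, ∑ i ∈ B, f i := by
  have hsub : {B ∈ L | B ⊂ A}.biUnion id ⊆ A :=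
    biUnion_subset.2 fun B hB => (mem_filter.1 hB).2.subset
  rw [privatePart, ← sum_sdiff hsub, ← biUnion_children,
    sum_biUnion (hL.pairwiseDisjoint_children A)]
  rfl

theorem forall_sum_privatePart_mem_iff (hL : IsLaminar L) (G : AddSubgroup M) (f : γ → M) :
    (∀ A ∈ L, ∑ i ∈ privatePart L A, f i ∈ G) ↔ ∀ A ∈ L, ∑ i ∈ A, f i ∈ G := by
  have hchild : ∀ {A B}, B ∈ children L A → B ∈ L ∧ B ⊂ A := fun hB =>
    ⟨(mem_filter.1 hB).1, (mem_filter.1 (mem_filter.1 hB).2.1).2⟩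
  refine ⟨fun h A hA => ?_, fun h A hA => ?_⟩
  · induction A using Finset.strongInduction with
    | H A ih =>
    rw [hL.sum_eq_sum_privatePart_add A]
    exact G.add_mem (h A hA) (G.sum_mem fun B hB => ih B (hchild hB).2 (hchild hB).1)
  · have := hL.sum_eq_sum_privatePart_add A f
    rw [eq_sub_of_add_eq this.symm]
    exact G.sub_mem (h A hA) (G.sum_mem fun B hB => h B (hchild hB).1)

theorem pairwiseDisjoint_privatePart (hL : IsLaminar L) :
    (L : Set (Finset γ)).PairwiseDisjoint (privatePart L) := by
  have key : ∀ {A B}, A ∈ L → A ⊂ B → Disjoint A (privatePart L B) := fun hA hAB =>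
    disjoint_right.2 fun x hx hxA =>
      (mem_sdiff.1 hx).2 (mem_biUnion.2 ⟨_, mem_filter.2 ⟨hA, hAB⟩, hxA⟩)
  have hsub : ∀ A, privatePart L A ⊆ A := fun A => sdiff_subset
  intro A hA B hB hne
  rcases hL A hA B hB with h | h | h
  · exact (key hA (ssubset_of_subset_of_ne h hne)).mono_left (hsub A)
  · exact ((key hB (ssubset_of_subset_of_ne h hne.symm)).mono_left (hsub B)).symm
  · exact h.mono (hsub A) (hsub B)

def blocks (L : Finset (Finset γ)) (U : Finset γ) : Finset (Finset γ) :=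
  (L.image fun A => privatePart L A ∩ U).erase ∅

theorem pairwiseDisjoint_blocks (hL : IsLaminar L) (U : Finset γ) :
    (blocks L U : Set (Finset γ)).PairwiseDisjoint id := by
  refine Set.PairwiseDisjoint.subset ?_ (coe_subset.2 (erase_subset _ _))
  simp only [coe_image]
  rintro _ ⟨A, hA, rfl⟩ _ ⟨B, hB, rfl⟩ hne
  have hAB : A ≠ B := by rintro rfl; exact hne rfl
  exact (hL.pairwiseDisjoint_privatePart hA hB hAB).mono inter_subset_left inter_subset_left

theorem subset_of_mem_blocks {U b : Finset γ} (hb : b ∈ blocks L U) : b ⊆ U := by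
  obtain ⟨A, -, rfl⟩ := mem_image.1 (mem_of_mem_erase hb)
  exact inter_subset_right

/-- A one-point block `{x}` of `A` would put `z x` in `G`: the private part of `A` has its sum in
`G`, and so have its points outside `U`. -/
theorem two_le_card_of_mem_blocks (hL : IsLaminar L) {G : AddSubgroup M} {z : γ → M}
    (hzL : ∀ A ∈ L, ∑ i ∈ A, z i ∈ G) {U : Finset γ} (hU : ∀ i, i ∈ U ↔ z i ∉ G)
    {b : Finset γ} (hb : b ∈ blocks L U) : 2 ≤ #b := by
  obtain ⟨hb0, hbL⟩ := mem_erase.1 hb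
  obtain ⟨A, hA, rfl⟩ := mem_image.1 hbL
  by_contra! hlt
  obtain ⟨x, hx⟩ := card_eq_one.1 (by
    have := card_pos.2 (nonempty_iff_ne_empty.2 hb0)
    omega : #(privatePart L A ∩ U) = 1)
  have hxU : x ∈ U := inter_subset_right (hx ▸ mem_singleton_self x)
  have hpriv := (hL.forall_sum_privatePart_mem_iff G z).2 hzL A hA
  rw [← sum_inter_add_sum_sdiff _ U, hx, sum_singleton] at hpriv
  refine (hU x).1 hxU ((G.add_mem_cancel_right ?_).1 hpriv)
  exact G.sum_mem fun i hi => not_not.1 (mt (hU i).2 (mem_sdiff.1 hi).2)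

theorem forall_sum_eq_zero_of_blocks (hL : IsLaminar L) {U : Finset γ} {d : γ → M}
    (hdU : ∀ i ∉ U, d i = 0) (hd : ∀ b ∈ blocks L U, ∑ i ∈ b, d i = 0) :
    ∀ A ∈ L, ∑ i ∈ A, d i = 0 := by
  simpa using (hL.forall_sum_privatePart_mem_iff ⊥ d).1 fun A hA => by
    rw [AddSubgroup.mem_bot, ← sum_inter_add_sum_sdiff _ U,
      sum_eq_zero fun i hi => hdU i (mem_sdiff.1 hi).2, add_zero]
    by_cases hb : privatePart L A ∩ U = ∅
    · rw [hb, sum_empty]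
    · exact hd _ (mem_erase.2 ⟨hb, mem_image_of_mem _ hA⟩)

end IsLaminar

theorem two_mul_card_le_card_biUnion [DecidableEq γ] {P : Finset (Finset γ)}
    (hP : (P : Set (Finset γ)).PairwiseDisjoint id) (hP2 : ∀ b ∈ P, 2 ≤ #b) :
    2 * #P ≤ #(P.biUnion id) := by
  rw [card_biUnion hP, mul_comm, ← smul_eq_mul, ← sum_const]
  exact sum_le_sum hP2

end Laminar

section LinearAlgebra

open Module Submodule

variable {γ : Type*} [Fintype γ] [DecidableEq γ]

noncomputable def indicatorVec (b : Finset γ) : γ → ℝ :=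
  (b : Set γ).indicator 1

theorem exists_ne_zero_sum_eq_zero_of_finrank_lt {U : Finset γ} {B : Finset (Finset γ)}
    (h : (B.image indicatorVec : Set (γ → ℝ)).finrank ℝ < #U) :
    ∃ d : γ → ℝ, d ≠ 0 ∧ (∀ i ∉ U, d i = 0) ∧ ∀ b ∈ B, ∑ i ∈ b, d i = 0 := by
  set K := span ℝ (B.image indicatorVec : Set (γ → ℝ)) ⊔
    span ℝ (Uᶜ.image fun i => Pi.single i (1 : ℝ) : Set (γ → ℝ))
  have hK : K < ⊤ := by
    refine lt_top_of_finrank_lt_finrank ?_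
    calc finrank ℝ K ≤ _ := finrank_add_le_finrank_add_finrank _ _
      _ < #U + #Uᶜ :=
        add_lt_add_of_lt_of_le h ((finrank_span_finset_le_card _).trans card_image_le)
      _ = finrank ℝ (γ → ℝ) := by rw [card_add_card_compl, finrank_fintype_fun_eq_card]
  obtain ⟨f, hf0, hKf⟩ := K.exists_le_ker_of_lt_top hK
  have hf : ∀ x, f x = ∑ i, x i * f (Pi.single i 1) := fun x => by
    rw [LinearMap.pi_apply_eq_sum_univ f x]
    congr! 3 with i
    ext j
    simp [Pi.single_apply, eq_comm]
  refine ⟨fun i => f (Pi.single i 1), fun hd => hf0 ?_, fun i hi => ?_, fun b hb => ?_⟩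
  · refine LinearMap.ext fun x => ?_
    rw [hf]
    simp [congrFun hd]
  · exact hKf (mem_sup_right (subset_span (mem_image_of_mem _ (mem_compl.2 hi))))
  · have := hKf (mem_sup_left (subset_span (mem_image_of_mem _ hb)))
    rw [LinearMap.mem_ker, hf] at this
    simpa [indicatorVec, Set.indicator_apply] using this

theorem indicatorVec_mem_span_of_biUnion_eq {P : Finset (Finset γ)} {U : Finset γ}
    (hP : (P : Set (Finset γ)).PairwiseDisjoint id) (hPU : P.biUnion id = U) :
    indicatorVec U ∈ span ℝ (P.image indicatorVec : Set (γ → ℝ)) := by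
  have hP' : (P : Set (Finset γ)).PairwiseDisjoint fun b => (b : Set γ) :=
    fun b hb b' hb' hne => disjoint_coe.2 (hP hb hb' hne)
  have hcoe : ((P.biUnion id : Finset γ) : Set γ) = ⋃ b ∈ P, (b : Set γ) := by simp
  rw [indicatorVec, ← hPU, hcoe, indicator_biUnion P _ hP', ← sum_fn]
  exact sum_mem fun b hb => subset_span (mem_image_of_mem _ hb)

/-- Counting gives at most `#U` generators; when there are exactly `#U`, both families cover `U`,
so their indicators sum to that of `U` in two ways. -/
theorem finrank_span_indicatorVec_lt {U : Finset γ} (hU : U.Nonempty) {P Q : Finset (Finset γ)}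
    (hP : (P : Set (Finset γ)).PairwiseDisjoint id) (hQ : (Q : Set (Finset γ)).PairwiseDisjoint id)
    (hPU : ∀ b ∈ P, b ⊆ U) (hQU : ∀ b ∈ Q, b ⊆ U) (hP2 : ∀ b ∈ P, 2 ≤ #b)
    (hQ2 : ∀ b ∈ Q, 2 ≤ #b) :
    ((P ∪ Q).image indicatorVec : Set (γ → ℝ)).finrank ℝ < #U := by
  rw [Set.finrank, image_union, coe_union, span_union]
  set VP := span ℝ (P.image indicatorVec : Set (γ → ℝ))
  set VQ := span ℝ (Q.image indicatorVec : Set (γ → ℝ))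
  have hPcov := card_le_card (biUnion_subset (t := id).2 hPU)
  have hQcov := card_le_card (biUnion_subset (t := id).2 hQU)
  have hPcard := two_mul_card_le_card_biUnion hP hP2
  have hQcard := two_mul_card_le_card_biUnion hQ hQ2
  have hPrk : finrank ℝ VP ≤ #P := (finrank_span_finset_le_card _).trans card_image_le
  have hQrk : finrank ℝ VQ ≤ #Q := (finrank_span_finset_le_card _).trans card_image_le
  have hsup := finrank_sup_add_finrank_inf_eq VP VQ
  by_cases hlt : #P + #Q < #U
  · omega
  have hPU' : P.biUnion id = U := eq_of_subset_of_card_le (biUnion_subset.2 hPU) (by omega)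
  have hQU' : Q.biUnion id = U := eq_of_subset_of_card_le (biUnion_subset.2 hQU) (by omega)
  have hinf : VP ⊓ VQ ≠ ⊥ := by
    refine (Submodule.ne_bot_iff _).2 ⟨indicatorVec U, ⟨indicatorVec_mem_span_of_biUnion_eq hP hPU',
      indicatorVec_mem_span_of_biUnion_eq hQ hQU'⟩, fun h0 => ?_⟩
    obtain ⟨i, hi⟩ := hU
    simpa [indicatorVec, hi] using congrFun h0 i
  have := Submodule.finrank_eq_zero.not.2 hinf
  omega

theorem exists_ne_zero_forall_sum_eq_zero_of_isLaminar {G : AddSubgroup ℝ} {z : γ → ℝ}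
    (hz : ∃ i, z i ∉ G) {L L' : Finset (Finset γ)} (hL : IsLaminar L) (hL' : IsLaminar L')
    (hzL : ∀ A ∈ L, ∑ i ∈ A, z i ∈ G) (hzL' : ∀ A ∈ L', ∑ i ∈ A, z i ∈ G) :
    ∃ d : γ → ℝ, d ≠ 0 ∧ (∀ i, z i ∈ G → d i = 0) ∧ (∀ A ∈ L, ∑ i ∈ A, d i = 0) ∧
      ∀ A ∈ L', ∑ i ∈ A, d i = 0 := by
  set U := univ.filter fun i => z i ∉ G
  have hU : ∀ i, i ∈ U ↔ z i ∉ G := by simp [U]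
  obtain ⟨d, hd0, hdU, hd⟩ := exists_ne_zero_sum_eq_zero_of_finrank_lt <|
    finrank_span_indicatorVec_lt (hz.imp fun i hi => (hU i).2 hi)
      (hL.pairwiseDisjoint_blocks U) (hL'.pairwiseDisjoint_blocks U)
      (fun _ => IsLaminar.subset_of_mem_blocks) (fun _ => IsLaminar.subset_of_mem_blocks)
      (fun _ => hL.two_le_card_of_mem_blocks hzL hU)
      (fun _ => hL'.two_le_card_of_mem_blocks hzL' hU)
  exact ⟨d, hd0, fun i hi => hdU i (mt (hU i).1 (not_not.2 hi)),
    hL.forall_sum_eq_zero_of_blocks hdU fun b hb => hd b (mem_union_left _ hb),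
    hL'.forall_sum_eq_zero_of_blocks hdU fun b hb => hd b (mem_union_right _ hb)⟩

end LinearAlgebra

section Perturbation

open Filter Topology

theorem eventually_add_mul_le {a b δ : ℝ} (hab : a ≤ b) (h : a = b → δ = 0) :
    ∀ᶠ σ in 𝓝 (0 : ℝ), a + σ * δ ≤ b := by
  rcases hab.lt_or_eq with hlt | heq
  · have hc : Tendsto (fun σ => a + σ * δ) (𝓝 0) (𝓝 (a + 0 * δ)) :=
      (continuous_const.add (continuous_id.mul continuous_const)).tendsto 0
    rw [zero_mul, add_zero] at hc
    exact hc.eventually (eventually_le_nhds hlt)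
  · exact Eventually.of_forall fun σ => by simp [h heq, heq]

theorem eventually_le_add_mul {a b δ : ℝ} (hab : b ≤ a) (h : a = b → δ = 0) :
    ∀ᶠ σ in 𝓝 (0 : ℝ), b ≤ a + σ * δ := by
  filter_upwards [eventually_add_mul_le (neg_le_neg hab) fun h' => neg_eq_zero.2 (h (neg_inj.1 h'))]
    with σ hσ
  linarith

theorem eq_zero_of_eventually_add_smul_mem {E : Type*} [AddCommGroup E] [Module ℝ E] {A : Set E}
    {z d : E} (hz : z ∈ A.extremePoints ℝ) (hd : ∀ᶠ σ in 𝓝 (0 : ℝ), z + σ • d ∈ A) : d = 0 := by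
  have hneg : ∀ᶠ σ in 𝓝 (0 : ℝ), z + (-σ) • d ∈ A :=
    (continuous_neg.tendsto' (0 : ℝ) 0 neg_zero).eventually hd
  obtain ⟨σ, ⟨hplus, hminus⟩, hσ⟩ := (((hd.and hneg).filter_mono nhdsWithin_le_nhds).and
    (self_mem_nhdsWithin (s := Set.Ioi 0))).exists
  have hseg : z ∈ openSegment ℝ (z + σ • d) (z + (-σ) • d) :=
    ⟨1 / 2, 1 / 2, by norm_num, by norm_num, by norm_num, by module⟩
  have := (mem_extremePoints.1 hz).2 _ hplus _ hminus hseg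
  simpa [hσ.ne'] using this.1

end Perturbation

section Polytope

open Filter Topology

variable {F1 F2 D' : Type*} [Fintype F1] [Fintype F2]
  (M' : Matroid (F1 ⊕ F2)) (M2 : Matroid F2) (S : D' → Finset F1) (lb1 ub1 lb2 ub2 lb ub : ℤ)

def polytopeR' : Set (F1 ⊕ F2 → ℝ) :=
  {z | (∀ i, 0 ≤ z i) ∧
      (∀ T : Finset (F1 ⊕ F2), ∑ i ∈ T, z i ≤ (matroidRank M' T : ℝ)) ∧
      (∀ T : Finset F2, ∑ i ∈ T, z (Sum.inr i) ≤ (matroidRank M2 T : ℝ)) ∧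
      ((lb1 : ℝ) ≤ ∑ i : F1, z (Sum.inl i)) ∧
      (∑ i : F1, z (Sum.inl i) ≤ (ub1 : ℝ)) ∧
      ((lb2 : ℝ) ≤ ∑ i : F2, z (Sum.inr i)) ∧
      (∑ i : F2, z (Sum.inr i) ≤ (ub2 : ℝ)) ∧
      ((lb : ℝ) ≤ ∑ i, z i) ∧ (∑ i, z i ≤ (ub : ℝ)) ∧
      (∀ j : D', ∑ i ∈ S j, z (Sum.inl i) = 1)}

def IsTightDirection (z d : F1 ⊕ F2 → ℝ) : Prop :=
  (∀ i, z i = 0 → d i = 0) ∧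
  (∀ T : Finset (F1 ⊕ F2), ∑ i ∈ T, z i = matroidRank M' T → ∑ i ∈ T, d i = 0) ∧
  (∀ T : Finset F2, ∑ i ∈ T, z (.inr i) = matroidRank M2 T → ∑ i ∈ T, d (.inr i) = 0) ∧
  (∑ i, z (.inl i) = lb1 ∨ ∑ i, z (.inl i) = ub1 → ∑ i, d (.inl i) = 0) ∧
  (∑ i, z (.inr i) = lb2 ∨ ∑ i, z (.inr i) = ub2 → ∑ i, d (.inr i) = 0) ∧
  (∑ i, z i = lb ∨ ∑ i, z i = ub → ∑ i, d i = 0) ∧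
  ∀ j, ∑ i ∈ S j, d (.inl i) = 0

/-- The sets `S j`, `𝓕₁'`, `𝓕₂`, `𝓕'`, and the members of a family `C2` of subsets of `𝓕₂`. -/
noncomputable def sideFamily [Fintype D'] (C2 : Finset (Finset F2)) : Finset (Finset (F1 ⊕ F2)) :=
  insert univ ((insert univ (univ.image S)).image (·.map .inl) ∪
    (insert univ C2).image (·.map .inr))

variable {M' M2 S lb1 ub1 lb2 ub2 lb ub}

theorem isLaminar_sideFamily [Fintype D'] (hdisj : ∀ j k, j ≠ k → Disjoint (S j) (S k))
    {C2 : Finset (Finset F2)} (hC2 : IsChain (· ⊆ ·) (C2 : Set (Finset F2))) :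
    IsLaminar (sideFamily S C2) := by
  unfold sideFamily
  refine IsLaminar.insert (IsLaminar.union ?_ ?_ ?_) fun _ _ => subset_univ _
  · exact ((IsLaminar.image_of_pairwise_disjoint univ hdisj).insert fun _ _ =>
      subset_univ _).image_map _
  · exact ((IsLaminar.of_isChain hC2).insert fun _ _ => subset_univ _).image_map _
  · simp only [mem_image]
    rintro _ ⟨A, -, rfl⟩ _ ⟨B, -, rfl⟩
    exact disjoint_map_inl_map_inr A B

theorem eventually_add_smul_mem_polytopeR' {z d : F1 ⊕ F2 → ℝ}
    (hz : z ∈ polytopeR' M' M2 S lb1 ub1 lb2 ub2 lb ub)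
    (hd : IsTightDirection M' M2 S lb1 ub1 lb2 ub2 lb ub z d) :
    ∀ᶠ σ in 𝓝 (0 : ℝ), z + σ • d ∈ polytopeR' M' M2 S lb1 ub1 lb2 ub2 lb ub := by
  obtain ⟨hpos, hrk', hrk2, hlb1, hub1, hlb2, hub2, hlb, hub, hS⟩ := hz
  obtain ⟨hd0, hd', hd2, hd1s, hd2s, hds, hdS⟩ := hd
  filter_upwards [eventually_all.2 fun i => eventually_le_add_mul (hpos i) (hd0 i),
    eventually_all.2 fun T => eventually_add_mul_le (hrk' T) (hd' T),
    eventually_all.2 fun T => eventually_add_mul_le (hrk2 T) (hd2 T),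
    eventually_le_add_mul hlb1 fun h => hd1s (.inl h),
    eventually_add_mul_le hub1 fun h => hd1s (.inr h),
    eventually_le_add_mul hlb2 fun h => hd2s (.inl h),
    eventually_add_mul_le hub2 fun h => hd2s (.inr h),
    eventually_le_add_mul hlb fun h => hds (.inl h),
    eventually_add_mul_le hub fun h => hds (.inr h)]
    with σ h0 h' h2 hlb1' hub1' hlb2' hub2' hlb' hub'
  simp only [polytopeR', Set.mem_ofPred_eq, Pi.add_apply, Pi.smul_apply, smul_eq_mul,
    sum_add_distrib, ← mul_sum]
  refine ⟨h0, h', h2, hlb1', hub1', hlb2', hub2', hlb', hub', fun j => ?_⟩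
  rw [hS j, hdS j, mul_zero, add_zero]

theorem exists_ne_zero_isTightDirection [Fintype D'] (hdisj : ∀ j k, j ≠ k → Disjoint (S j) (S k))
    {z : F1 ⊕ F2 → ℝ} (hz : z ∈ polytopeR' M' M2 S lb1 ub1 lb2 ub2 lb ub)
    (hfrac : ∃ i, z i ∉ (Int.castAddHom ℝ).range) :
    ∃ d, d ≠ 0 ∧ IsTightDirection M' M2 S lb1 ub1 lb2 ub2 lb ub z d := by
  obtain ⟨-, hrk', hrk2, -, -, -, -, -, -, hS⟩ := hz
  set G := (Int.castAddHom ℝ).range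
  have hG : ∀ n : ℤ, (n : ℝ) ∈ G := fun n => ⟨n, rfl⟩
  have hGnat : ∀ n : ℕ, (n : ℝ) ∈ G := fun n => ⟨n, by simp⟩
  obtain ⟨C1, hC1z, hC1, hC1d⟩ := exists_isChain_forall_sum_eq_zero_of_submodular
    (fun A B => by exact_mod_cast matroidRank_union_add_inter_le M' A B) hrk'
  obtain ⟨C2, hC2z, hC2, hC2d⟩ := exists_isChain_forall_sum_eq_zero_of_submodular
    (fun A B => by exact_mod_cast matroidRank_union_add_inter_le M2 A B) hrk2
  obtain ⟨d, hd0, hdG, hdC1, hdL2⟩ := exists_ne_zero_forall_sum_eq_zero_of_isLaminar hfrac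
    (IsLaminar.of_isChain hC1) ((isLaminar_sideFamily hdisj hC2).subset (filter_subset
      (fun X => ∑ i ∈ X, z i ∈ G) _)) (fun A hA => hC1z A hA ▸ hGnat _)
    fun A hA => (mem_filter.1 hA).2
  have hside : ∀ X ∈ sideFamily S C2, ∑ i ∈ X, z i ∈ G → ∑ i ∈ X, d i = 0 :=
    fun X hX hXz => hdL2 X (mem_filter.2 ⟨hX, hXz⟩)
  have hbound : ∀ {s : ℝ} {a b : ℤ}, s = a ∨ s = b → s ∈ G := by
    rintro _ a b (rfl | rfl) <;> exact hG _
  refine ⟨d, hd0, fun i hi => hdG i (hi ▸ G.zero_mem), fun T hT => hC1d d hdC1 T hT,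
    fun T hT => hC2d _ (fun A hA => ?_) T hT, fun h => ?_, fun h => ?_, fun h => ?_, fun j => ?_⟩
  · simpa using hside (A.map .inr) (by simp [sideFamily, hA]) (by simpa [hC2z A hA] using hGnat _)
  · simpa using hside (univ.map .inl) (by simp [sideFamily]) (by simpa using hbound h)
  · simpa using hside (univ.map .inr) (by simp [sideFamily]) (by simpa using hbound h)
  · simpa using hside univ (by simp [sideFamily]) (hbound h)
  · simpa using hside ((S j).map .inl) (by simp [sideFamily]) (by simpa [hS j] using hG 1)

end Polytope

theorem polytope_R'_integral_general
    {F1 F2 D' : Type*} [Fintype F1] [Fintype F2] [Fintype D']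
    (M' : Matroid (F1 ⊕ F2))
    (M2 : Matroid F2)
    (S : D' → Finset F1)
    (hdisj : ∀ j k, j ≠ k → Disjoint (S j) (S k))
    (lb1 ub1 lb2 ub2 lb ub : ℤ)
    (R : Set (F1 ⊕ F2 → ℝ))
    (hR : R = {z | (∀ i, 0 ≤ z i) ∧
      (∀ T : Finset (F1 ⊕ F2), ∑ i ∈ T, z i ≤ (matroidRank M' T : ℝ)) ∧
      (∀ T : Finset F2, ∑ i ∈ T, z (Sum.inr i) ≤ (matroidRank M2 T : ℝ)) ∧
      ((lb1 : ℝ) ≤ ∑ i : F1, z (Sum.inl i)) ∧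
      (∑ i : F1, z (Sum.inl i) ≤ (ub1 : ℝ)) ∧
      ((lb2 : ℝ) ≤ ∑ i : F2, z (Sum.inr i)) ∧
      (∑ i : F2, z (Sum.inr i) ≤ (ub2 : ℝ)) ∧
      ((lb : ℝ) ≤ ∑ i, z i) ∧ (∑ i, z i ≤ (ub : ℝ)) ∧
      (∀ j : D', ∑ i ∈ S j, z (Sum.inl i) = 1)}) :
    ∀ z ∈ R.extremePoints ℝ, ∀ i, z i ∈ ({0, 1} : Set ℝ) := by
  subst hR
  intro z hz i
  have hint : ∀ i, z i ∈ (Int.castAddHom ℝ).range := by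
    by_contra! hfrac
    obtain ⟨d, hd0, hd⟩ := exists_ne_zero_isTightDirection hdisj hz.1 hfrac
    exact hd0 (eq_zero_of_eventually_add_smul_mem hz (eventually_add_smul_mem_polytopeR' hz.1 hd))
  obtain ⟨n, hn⟩ : ∃ n : ℤ, (n : ℝ) = z i := hint i
  have h0 : 0 ≤ z i := hz.1.1 i
  have h1 : z i ≤ 1 := by
    simpa using (hz.1.2.1 {i}).trans (by exact_mod_cast matroidRank_le_card M' {i})
  rw [← hn] at h0 h1 ⊢
  have : n = 0 ∨ n = 1 := by
    have : 0 ≤ n := by exact_mod_cast h0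
    have : n ≤ 1 := by exact_mod_cast h1
    omega
  rcases this with rfl | rfl <;> simp

/-- Every extreme point of the polytope `ℛ'` (used for two-matroid median) is
integral, i.e. has all coordinates in `{0, 1}`. -/
theorem polytope_R'_integral
    {F1 F2 D' : Type*} [Fintype F1] [Fintype F2] [Fintype D']
    (M' : Matroid (F1 ⊕ F2)) (hM'E : M'.E = Set.univ)
    (M2 : Matroid F2) (hM2E : M2.E = Set.univ)
    (S : D' → Finset F1)
    (hdisj : ∀ j k, j ≠ k → Disjoint (S j) (S k))
    (lb1 ub1 lb2 ub2 lb ub : ℤ)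
    (h1 : lb1 ≤ ub1) (h2 : lb2 ≤ ub2) (h : lb ≤ ub)
    (R : Set (F1 ⊕ F2 → ℝ))
    (hR : R = {z | (∀ i, 0 ≤ z i) ∧
      (∀ T : Finset (F1 ⊕ F2), ∑ i ∈ T, z i ≤ (matroidRank M' T : ℝ)) ∧
      (∀ T : Finset F2, ∑ i ∈ T, z (Sum.inr i) ≤ (matroidRank M2 T : ℝ)) ∧
      ((lb1 : ℝ) ≤ ∑ i : F1, z (Sum.inl i)) ∧
      (∑ i : F1, z (Sum.inl i) ≤ (ub1 : ℝ)) ∧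
      ((lb2 : ℝ) ≤ ∑ i : F2, z (Sum.inr i)) ∧
      (∑ i : F2, z (Sum.inr i) ≤ (ub2 : ℝ)) ∧
      ((lb : ℝ) ≤ ∑ i, z i) ∧ (∑ i, z i ≤ (ub : ℝ)) ∧
      (∀ j : D', ∑ i ∈ S j, z (Sum.inl i) = 1)}) :
    ∀ z ∈ R.extremePoints ℝ, ∀ i, z i ∈ ({0, 1} : Set ℝ) :=
  polytope_R'_integral_general M' M2 S hdisj lb1 ub1 lb2 ub2 lb ub R hR
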